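/- For the constrained transfer operator L_{σ} on C¹([0,1]) given by (L_σ f)(x) = Σ_{a=1}^{A} (x+a)^{-2σ} f(1/(x+a)) with σ > 0 and A ≥ 2 fixed, a Lasota–Yorke-type inequality holds: there exist constants C > 0 and 0 < ρ < 1 (depending only on σ and A) such that for every f ∈ C¹([0,1]) and every n ≥ 1, ‖(L_σⁿ f)'‖_∞ ≤ C·ρⁿ·‖f'‖_∞·‖L_σⁿ 1‖_∞ + C·‖f‖_∞·‖L_σⁿ 1‖_∞, where 1 denotes the constant function. -/

import Mathlib

/-!
Each inverse branch `y ↦ (y + a)⁻¹` maps `[0, 1]` into `J = [(A + 1)⁻¹, 1]`, and on `J` its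
derivative `(y + a)⁻²` is at most `ρ = (1 + (A + 1)⁻¹)⁻² < 1`. Differentiating `L g` produces a
term from the weights, bounded by `2|σ|` times `L |g|` because `(x + a)^(-2σ-1) ≤ (x + a)^(-2σ)`,
and a term in `g' ∘ h_a` damped by `|h_a'|`. Together with `|Lᵐ f| ≤ ‖f‖ Lᵐ 1` this gives by
induction on `J` that `|(Lᵐ f)'| ≤ (K ‖f‖ + ρᵐ ‖f'‖) Lᵐ 1` with `K = 2|σ| / (1 - ρ)`; one last
step, with contraction factor `1` on `[0, 1]`, gives the bound there.
-/

open Set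

noncomputable def transferOp (A : ℕ) (σ : ℝ) (g : ℝ → ℝ) (x : ℝ) : ℝ :=
  ∑ a ∈ Finset.Icc 1 A, (x + a) ^ (-(2 * σ)) * g (x + a)⁻¹

section

variable {A : ℕ} {σ : ℝ}

lemma one_le_natCast_of_mem_Icc {a : ℕ} (ha : a ∈ Finset.Icc 1 A) : (1 : ℝ) ≤ a := by
  exact_mod_cast (Finset.mem_Icc.mp ha).1

lemma hasDerivAt_transferOp {g : ℝ → ℝ} {x : ℝ} (hx : 0 ≤ x)
    (hg : ∀ a ∈ Finset.Icc 1 A, DifferentiableAt ℝ g (x + a)⁻¹) :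
    HasDerivAt (transferOp A σ g)
      (∑ a ∈ Finset.Icc 1 A, (-(2 * σ) * (x + a) ^ (-(2 * σ) - 1) * g (x + a)⁻¹
        - (x + a) ^ (-(2 * σ)) * ((x + a) ^ 2)⁻¹ * deriv g (x + a)⁻¹)) x := by
  unfold transferOp
  refine HasDerivAt.fun_sum fun a ha => ?_
  have hpos : (0 : ℝ) < x + a := by linarith [one_le_natCast_of_mem_Icc ha]
  have hshift : HasDerivAt (fun y : ℝ => y + a) 1 x := (hasDerivAt_id' x).add_const _
  have hweight := hshift.rpow_const (p := -(2 * σ)) (Or.inl hpos.ne')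
  have hbranch := (hasDerivAt_inv hpos.ne').comp x hshift
  refine (hweight.fun_mul ((hg a ha).hasDerivAt.comp x hbranch)).congr_deriv ?_
  simp only [Function.comp_apply]
  ring

lemma abs_transferOp_le {g G : ℝ → ℝ} {c x : ℝ} (hx : 0 ≤ x)
    (hg : ∀ a ∈ Finset.Icc 1 A, |g (x + a)⁻¹| ≤ c * G (x + a)⁻¹) :
    |transferOp A σ g x| ≤ c * transferOp A σ G x := by
  unfold transferOp
  rw [Finset.mul_sum]
  refine (Finset.abs_sum_le_sum_abs _ _).trans (Finset.sum_le_sum fun a ha => ?_)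
  have hw : 0 ≤ (x + a) ^ (-(2 * σ)) :=
    Real.rpow_nonneg (by linarith [one_le_natCast_of_mem_Icc ha]) _
  rw [abs_mul, abs_of_nonneg hw, mul_left_comm]
  exact mul_le_mul_of_nonneg_left (hg a ha) hw

lemma transferOp_nonneg {G : ℝ → ℝ} {x : ℝ} (hx : 0 ≤ x)
    (hG : ∀ a ∈ Finset.Icc 1 A, 0 ≤ G (x + a)⁻¹) : 0 ≤ transferOp A σ G x :=
  Finset.sum_nonneg fun a ha =>
    mul_nonneg (Real.rpow_nonneg (by linarith [one_le_natCast_of_mem_Icc ha]) _) (hG a ha)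

lemma abs_deriv_transferOp_le {g G : ℝ → ℝ} {x r B₀ B₁ : ℝ} (hx : 0 ≤ x)
    (hr : ∀ a ∈ Finset.Icc 1 A, ((x + a) ^ 2)⁻¹ ≤ r)
    (hg : ∀ a ∈ Finset.Icc 1 A, DifferentiableAt ℝ g (x + a)⁻¹)
    (hg₀ : ∀ a ∈ Finset.Icc 1 A, |g (x + a)⁻¹| ≤ B₀ * G (x + a)⁻¹)
    (hg₁ : ∀ a ∈ Finset.Icc 1 A, |deriv g (x + a)⁻¹| ≤ B₁ * G (x + a)⁻¹) :
    |deriv (transferOp A σ g) x| ≤ (2 * |σ| * B₀ + r * B₁) * transferOp A σ G x := by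
  rw [(hasDerivAt_transferOp hx hg).deriv, transferOp, Finset.mul_sum]
  refine (Finset.abs_sum_le_sum_abs _ _).trans (Finset.sum_le_sum fun a ha => ?_)
  have hxa : 1 ≤ x + a := by linarith [one_le_natCast_of_mem_Icc ha]
  have hw : (x + a) ^ (-(2 * σ) - 1) ≤ (x + a) ^ (-(2 * σ)) :=
    Real.rpow_le_rpow_of_exponent_le hxa (by linarith)
  calc |-(2 * σ) * (x + a) ^ (-(2 * σ) - 1) * g (x + a)⁻¹
          - (x + a) ^ (-(2 * σ)) * ((x + a) ^ 2)⁻¹ * deriv g (x + a)⁻¹|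
      ≤ 2 * |σ| * ((x + a) ^ (-(2 * σ) - 1) * |g (x + a)⁻¹|)
          + (x + a) ^ (-(2 * σ)) * (((x + a) ^ 2)⁻¹ * |deriv g (x + a)⁻¹|) := by
        refine (abs_sub _ _).trans_eq ?_
        simp only [abs_mul, abs_neg, abs_two,
          abs_of_nonneg (by positivity : (0 : ℝ) ≤ (x + a) ^ (-(2 * σ))),
          abs_of_nonneg (by positivity : (0 : ℝ) ≤ (x + a) ^ (-(2 * σ) - 1)),
          abs_of_nonneg (by positivity : (0 : ℝ) ≤ ((x + a) ^ 2)⁻¹)]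
        ring
    _ ≤ 2 * |σ| * ((x + a) ^ (-(2 * σ)) * (B₀ * G (x + a)⁻¹))
          + (x + a) ^ (-(2 * σ)) * (r * (B₁ * G (x + a)⁻¹)) := by
        gcongr
        · exact hg₀ a ha
        · exact (by positivity : (0 : ℝ) ≤ ((x + a) ^ 2)⁻¹).trans (hr a ha)
        · exact hr a ha
        · exact hg₁ a ha
    _ = (2 * |σ| * B₀ + r * B₁) * ((x + a) ^ (-(2 * σ)) * G (x + a)⁻¹) := by ring

lemma inv_add_mem_Icc {a : ℕ} (ha : a ∈ Finset.Icc 1 A) {y : ℝ} (hy : y ∈ Icc (0 : ℝ) 1) :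
    (y + a)⁻¹ ∈ Icc ((A : ℝ) + 1)⁻¹ 1 := by
  have ha' : (a : ℝ) ≤ A := by exact_mod_cast (Finset.mem_Icc.mp ha).2
  have hya : 1 ≤ y + a := by linarith [hy.1, one_le_natCast_of_mem_Icc ha]
  exact ⟨inv_anti₀ (by linarith) (by linarith [hy.2]), inv_le_one_of_one_le₀ hya⟩

lemma inv_sq_add_le_of_mem_Icc {a : ℕ} (ha : a ∈ Finset.Icc 1 A) {y : ℝ}
    (hy : y ∈ Icc ((A : ℝ) + 1)⁻¹ 1) : ((y + a) ^ 2)⁻¹ ≤ ((1 + ((A : ℝ) + 1)⁻¹) ^ 2)⁻¹ :=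
  inv_anti₀ (by positivity)
    (pow_le_pow_left₀ (by positivity) (by linarith [hy.1, one_le_natCast_of_mem_Icc ha]) 2)

lemma Icc_inv_natCast_succ_subset : Icc ((A : ℝ) + 1)⁻¹ 1 ⊆ Icc 0 1 :=
  Icc_subset_Icc (by positivity) le_rfl

lemma iterate_transferOp_one_nonneg (m : ℕ) {y : ℝ} (hy : y ∈ Icc (0 : ℝ) 1) :
    0 ≤ (transferOp A σ)^[m] (fun _ => 1) y := by
  induction m generalizing y with
  | zero => simp
  | succ k ih =>
    rw [Function.iterate_succ_apply']
    exact transferOp_nonneg hy.1 fun a ha =>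
      ih (Icc_inv_natCast_succ_subset (inv_add_mem_Icc ha hy))

lemma abs_iterate_transferOp_le {f : ℝ → ℝ} {Mf : ℝ} (hf : ∀ y ∈ Icc (0 : ℝ) 1, |f y| ≤ Mf)
    (m : ℕ) {y : ℝ} (hy : y ∈ Icc (0 : ℝ) 1) :
    |(transferOp A σ)^[m] f y| ≤ Mf * (transferOp A σ)^[m] (fun _ => 1) y := by
  induction m generalizing y with
  | zero => simpa using hf y hy
  | succ k ih =>
    rw [Function.iterate_succ_apply', Function.iterate_succ_apply']
    exact abs_transferOp_le hy.1 fun a ha =>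
      ih (Icc_inv_natCast_succ_subset (inv_add_mem_Icc ha hy))

lemma differentiableAt_iterate_transferOp_and_abs_deriv_le {f : ℝ → ℝ} {Mf Df ρ K : ℝ}
    (hf : Differentiable ℝ f) (hMf : ∀ y ∈ Icc (0 : ℝ) 1, |f y| ≤ Mf)
    (hDf : ∀ y ∈ Icc ((A : ℝ) + 1)⁻¹ 1, |deriv f y| ≤ Df)
    (hρ : ∀ y ∈ Icc ((A : ℝ) + 1)⁻¹ 1, ∀ a ∈ Finset.Icc 1 A, ((y + a) ^ 2)⁻¹ ≤ ρ)
    (hK : 2 * |σ| + ρ * K ≤ K) (hK₀ : 0 ≤ K) (m : ℕ) {y : ℝ} (hy : y ∈ Icc ((A : ℝ) + 1)⁻¹ 1) :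
    DifferentiableAt ℝ ((transferOp A σ)^[m] f) y ∧
      |deriv ((transferOp A σ)^[m] f) y|
        ≤ (K * Mf + ρ ^ m * Df) * (transferOp A σ)^[m] (fun _ => 1) y := by
  have hMf₀ : 0 ≤ Mf := (abs_nonneg _).trans (hMf 0 ⟨le_rfl, zero_le_one⟩)
  induction m generalizing y with
  | zero =>
    refine ⟨hf y, ?_⟩
    simpa using (hDf y hy).trans (le_add_of_nonneg_left (by positivity))
  | succ k ih =>
    have hy₀ := Icc_inv_natCast_succ_subset hy
    have hbranch : ∀ a ∈ Finset.Icc 1 A, (y + a)⁻¹ ∈ Icc ((A : ℝ) + 1)⁻¹ 1 :=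
      fun a ha => inv_add_mem_Icc ha hy₀
    rw [Function.iterate_succ_apply', Function.iterate_succ_apply']
    refine ⟨(hasDerivAt_transferOp hy₀.1 fun a ha => (ih (hbranch a ha)).1).differentiableAt, ?_⟩
    calc _ ≤ (2 * |σ| * Mf + ρ * (K * Mf + ρ ^ k * Df))
            * transferOp A σ ((transferOp A σ)^[k] fun _ => 1) y :=
          abs_deriv_transferOp_le hy₀.1 (hρ y hy) (fun a ha => (ih (hbranch a ha)).1)
            (fun a ha =>
              abs_iterate_transferOp_le hMf k (Icc_inv_natCast_succ_subset (hbranch a ha)))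
            (fun a ha => (ih (hbranch a ha)).2)
      _ ≤ (K * Mf + ρ ^ (k + 1) * Df) * transferOp A σ ((transferOp A σ)^[k] fun _ => 1) y := by
          gcongr ?_ * _
          · exact transferOp_nonneg hy₀.1 fun a ha =>
              iterate_transferOp_one_nonneg k (Icc_inv_natCast_succ_subset (hbranch a ha))
          · rw [pow_succ]
            nlinarith [mul_le_mul_of_nonneg_right hK hMf₀]

lemma abs_deriv_iterate_succ_transferOp_le {f : ℝ → ℝ} {Mf Df ρ K : ℝ}
    (hf : Differentiable ℝ f) (hMf : ∀ y ∈ Icc (0 : ℝ) 1, |f y| ≤ Mf)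
    (hDf : ∀ y ∈ Icc ((A : ℝ) + 1)⁻¹ 1, |deriv f y| ≤ Df)
    (hρ : ∀ y ∈ Icc ((A : ℝ) + 1)⁻¹ 1, ∀ a ∈ Finset.Icc 1 A, ((y + a) ^ 2)⁻¹ ≤ ρ)
    (hK : 2 * |σ| + ρ * K ≤ K) (hK₀ : 0 ≤ K) (m : ℕ) {x : ℝ} (hx : x ∈ Icc (0 : ℝ) 1) :
    |deriv ((transferOp A σ)^[m + 1] f) x|
      ≤ ((2 * |σ| + K) * Mf + ρ ^ m * Df) * (transferOp A σ)^[m + 1] (fun _ => 1) x := by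
  have hbranch : ∀ a ∈ Finset.Icc 1 A, (x + a)⁻¹ ∈ Icc ((A : ℝ) + 1)⁻¹ 1 :=
    fun a ha => inv_add_mem_Icc ha hx
  have hiter := fun a ha =>
    differentiableAt_iterate_transferOp_and_abs_deriv_le hf hMf hDf hρ hK hK₀ m (hbranch a ha)
  rw [Function.iterate_succ_apply', Function.iterate_succ_apply']
  refine (abs_deriv_transferOp_le hx.1 (r := 1) (fun a ha => ?_) (fun a ha => (hiter a ha).1)
    (fun a ha => abs_iterate_transferOp_le hMf m (Icc_inv_natCast_succ_subset (hbranch a ha)))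
    (fun a ha => (hiter a ha).2)).trans_eq (by ring)
  exact inv_le_one_of_one_le₀ (one_le_pow₀ (by linarith [hx.1, one_le_natCast_of_mem_Icc ha]))

end

theorem lasota_yorke_constrained_general (A : ℕ) (σ : ℝ)
    (L : (ℝ → ℝ) → ℝ → ℝ)
    (hL : ∀ g : ℝ → ℝ, ∀ x : ℝ, L g x =
      ∑ a ∈ Finset.Icc 1 A, (x + (a : ℝ)) ^ (-(2 * σ)) * g (1 / (x + (a : ℝ)))) :
    ∃ C : ℝ, 0 < C ∧ ∃ ρ : ℝ, 0 < ρ ∧ ρ < 1 ∧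
      ∀ f : ℝ → ℝ, ContDiff ℝ 1 f → ∀ n : ℕ, 1 ≤ n →
        ∀ Mf Df M1 : ℝ,
          (∀ y ∈ Set.Icc (0 : ℝ) 1, |f y| ≤ Mf) →
          (∀ y ∈ Set.Icc (0 : ℝ) 1, |deriv f y| ≤ Df) →
          (∀ y ∈ Set.Icc (0 : ℝ) 1, |(L^[n] (fun _ => 1)) y| ≤ M1) →
          ∀ x ∈ Set.Icc (0 : ℝ) 1,
            |deriv (L^[n] f) x| ≤ C * ρ ^ n * Df * M1 + C * Mf * M1 := by
  obtain rfl : L = transferOp A σ := funext₂ fun g x => by simp only [hL, one_div, transferOp]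
  set ρ : ℝ := ((1 + ((A : ℝ) + 1)⁻¹) ^ 2)⁻¹
  have hρ₀ : 0 < ρ := by positivity
  have hρ₁ : ρ < 1 :=
    inv_lt_one_of_one_lt₀ (one_lt_pow₀ (lt_add_of_pos_right 1 (by positivity)) two_ne_zero)
  set K := 2 * |σ| / (1 - ρ) with hK_def
  have hK₀ : 0 ≤ K := div_nonneg (by positivity) (sub_pos.mpr hρ₁).le
  have hK : 2 * |σ| + ρ * K = K := by
    rw [hK_def]
    field_simp [(sub_pos.mpr hρ₁).ne']
    ring
  refine ⟨2 * |σ| + K + ρ⁻¹, by positivity, ρ, hρ₀, hρ₁,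
    fun f hf n hn Mf Df M1 hMf hDf hM1 x hx => ?_⟩
  obtain ⟨m, rfl⟩ := Nat.exists_eq_add_of_le' hn
  have hMf₀ : 0 ≤ Mf := (abs_nonneg _).trans (hMf 0 ⟨le_rfl, zero_le_one⟩)
  have hDf₀ : 0 ≤ Df := (abs_nonneg _).trans (hDf 0 ⟨le_rfl, zero_le_one⟩)
  have hM1x : (transferOp A σ)^[m + 1] (fun _ => 1) x ≤ M1 := (le_abs_self _).trans (hM1 x hx)
  have hM1₀ : 0 ≤ M1 := (iterate_transferOp_one_nonneg (m + 1) hx).trans hM1x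
  calc _ ≤ ((2 * |σ| + K) * Mf + ρ ^ m * Df) * (transferOp A σ)^[m + 1] (fun _ => 1) x :=
        abs_deriv_iterate_succ_transferOp_le (hf.differentiable one_ne_zero) hMf
          (fun y hy => hDf y (Icc_inv_natCast_succ_subset hy))
          (fun y hy a ha => inv_sq_add_le_of_mem_Icc ha hy) hK.le hK₀ m hx
    _ ≤ ((2 * |σ| + K) * Mf + ρ⁻¹ * ρ ^ (m + 1) * Df) * M1 := by
        rw [pow_succ', inv_mul_cancel_left₀ hρ₀.ne']
        gcongr
    _ ≤ _ := by
        have : 0 ≤ (2 * |σ| + K) * ρ ^ (m + 1) * Df * M1 + ρ⁻¹ * Mf * M1 := by positivity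
        linarith

/-- Lasota–Yorke inequality for the constrained transfer operator
`L_σ f (x) = Σ_{a=1}^{A} (x+a)^{-2σ} f(1/(x+a))`: there are `C > 0` and `0 < ρ < 1` such
that for every `f ∈ C¹` and every `n ≥ 1`,
`‖(L_σⁿ f)'‖_∞ ≤ C ρⁿ ‖f'‖_∞ ‖L_σⁿ 1‖_∞ + C ‖f‖_∞ ‖L_σⁿ 1‖_∞` on `[0,1]`. -/
theorem lasota_yorke_constrained (A : ℕ) (hA : 2 ≤ A) (σ : ℝ) (hσ : 0 < σ)
    (L : (ℝ → ℝ) → ℝ → ℝ)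
    (hL : ∀ g : ℝ → ℝ, ∀ x : ℝ, L g x =
      ∑ a ∈ Finset.Icc 1 A, (x + (a : ℝ)) ^ (-(2 * σ)) * g (1 / (x + (a : ℝ)))) :
    ∃ C : ℝ, 0 < C ∧ ∃ ρ : ℝ, 0 < ρ ∧ ρ < 1 ∧
      ∀ f : ℝ → ℝ, ContDiff ℝ 1 f → ∀ n : ℕ, 1 ≤ n →
        ∀ Mf Df M1 : ℝ,
          (∀ y ∈ Set.Icc (0 : ℝ) 1, |f y| ≤ Mf) →
          (∀ y ∈ Set.Icc (0 : ℝ) 1, |deriv f y| ≤ Df) →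
          (∀ y ∈ Set.Icc (0 : ℝ) 1, |(L^[n] (fun _ => 1)) y| ≤ M1) →
          ∀ x ∈ Set.Icc (0 : ℝ) 1,
            |deriv (L^[n] f) x| ≤ C * ρ ^ n * Df * M1 + C * Mf * M1 :=
  lasota_yorke_constrained_general A σ L hL
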